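/- arXiv:2412.07410 — 3 statements merged into one kernel-verified Lean document; each statement's English description precedes it below -/
import Mathlib

section
/- Let (B, A, ψ) be a quantum graph with B = ⊕_{a=1}^d M_{n_a}, ψ = ⊕_a Tr(ρ_a ·) a δ-form with ρ_a diagonal. Define D ∈ M_d by D_{ab} = ⟨ρ_b^{-1}, A(ρ_a^{-1})⟩_ψ. Then all entries of (1/δ²) D are non-negative integers. -/
open scoped TensorProduct ComplexOrder
open Matrix

/-- The multimatrix algebra `B = ⊕_{a=1}^d M_{n_a}` over `ℂ`. -/
abbrev MB (d : ℕ) (n : Fin d → ℕ) := ∀ a : Fin d, Matrix (Fin (n a)) (Fin (n a)) ℂ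

/-- The state `ψ = ⊕_a Tr(ρ_a ·)` as a linear functional. -/
noncomputable def psiL {d : ℕ} {n : Fin d → ℕ} (ρ : MB d n) : MB d n →ₗ[ℂ] ℂ where
  toFun X := ∑ a, (ρ a * X a).trace
  map_add' x y := by simp [mul_add, Finset.sum_add_distrib]
  map_smul' c x := by simp [Finset.mul_sum, mul_smul_comm]

/-- The GNS inner product on `B ⊗ B` paired against the pure tensor `x ⊗ y` in the first
(conjugated) slot. -/
noncomputable def pairL {d : ℕ} {n : Fin d → ℕ} (ρ : MB d n) (x y : MB d n) :
    (MB d n ⊗[ℂ] MB d n) →ₗ[ℂ] ℂ :=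
  TensorProduct.lift
    (LinearMap.mk₂ ℂ (fun c e => psiL ρ (star x * c) * psiL ρ (star y * e))
      (fun c c' e => by simp [mul_add, map_add, add_mul])
      (fun s c e => by simp [mul_smul_comm, _root_.map_smul, smul_eq_mul]; ring)
      (fun c e e' => by simp [mul_add, map_add])
      (fun s c e => by simp [mul_smul_comm, _root_.map_smul, smul_eq_mul]; ring))

/-!
Since `ψ` is faithful, the defining identity of `m*` pins it down on matrix units:
`m*(e^a_ij) = ∑_l (ρ_a)_ll⁻¹ e^a_il ⊗ e^a_lj`. Feeding this into the Schur idempotency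
`m (A ⊗ A) m* = δ² A` and reading off the `b`-th block, the matrices `Y_ij = A(e^a_ij)_b`
satisfy `∑_l (ρ_a)_ll⁻¹ Y_il Y_lj = δ² Y_ij`, i.e. the block matrix with blocks
`δ⁻² (ρ_a)_jj⁻¹ Y_ij` is idempotent. Its trace is therefore a natural number (its rank), and it
equals `δ⁻² D_ab`.
-/

theorem Matrix.trace_eq_rank_of_isIdempotentElem {K ι : Type*} [Field K] [Fintype ι]
    [DecidableEq ι] {P : Matrix ι ι K} (hP : IsIdempotentElem P) : P.trace = P.rank := by
  have h : IsIdempotentElem (toLin' P) := hP.map (toLinAlgEquiv' (R := K) (n := ι))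
  rw [← Matrix.trace_toLin'_eq, (LinearMap.IsIdempotentElem.isProj_range _ h).trace]
  rfl

theorem Matrix.trace_comp {ι κ R : Type*} [Fintype ι] [Fintype κ] [AddCommMonoid R]
    (M : Matrix ι ι (Matrix κ κ R)) : (comp ι ι κ κ R M).trace = ∑ i, (M i i).trace := by
  simp [trace, Fintype.sum_prod_type]

theorem Matrix.isIdempotentElem_of_sum_smul_mul {ι κ R : Type*} [Fintype ι] [Fintype κ]
    [CommSemiring R] (w : ι → R) (Y : ι → ι → Matrix κ κ R)
    (hY : ∀ i j, ∑ l, w l • (Y i l * Y l j) = Y i j) :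
    IsIdempotentElem (of fun i j => w j • Y i j) := by
  ext1 i j
  simp only [mul_apply, of_apply, smul_mul_smul_comm]
  rw [← hY i j, Finset.smul_sum]
  exact Finset.sum_congr rfl fun l _ => by rw [smul_smul, mul_comm]

namespace MB

variable {d : ℕ} {n : Fin d → ℕ}

noncomputable def blockUnit (a : Fin d) (i j : Fin (n a)) : MB d n :=
  Pi.single a (single i j 1)

noncomputable def stdBasis : Module.Basis (Σ a, Fin (n a) × Fin (n a)) ℂ (MB d n) :=
  Pi.basis fun a => Matrix.stdBasis ℂ (Fin (n a)) (Fin (n a))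

theorem stdBasis_apply (u : Σ a, Fin (n a) × Fin (n a)) :
    stdBasis u = (blockUnit u.1 u.2.1 u.2.2 : MB d n) := by
  rw [stdBasis, Pi.basis_apply, Matrix.stdBasis_eq_single]
  rfl

theorem stdBasis_repr (X : MB d n) (u : Σ a, Fin (n a) × Fin (n a)) :
    stdBasis.repr X u = X u.1 u.2.1 u.2.2 := by
  simp [stdBasis, Pi.basis_repr, Matrix.stdBasis]

theorem star_blockUnit (a : Fin d) (i j : Fin (n a)) :
    star (blockUnit a i j : MB d n) = blockUnit a j i := by
  simp [blockUnit, star_eq_conjTranspose]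

theorem single_diagonal_eq_sum_blockUnit (a : Fin d) (v : Fin (n a) → ℂ) :
    (Pi.single a (diagonal v) : MB d n) = ∑ i, v i • blockUnit a i i := by
  simp only [blockUnit, ← sum_single_eq_diagonal, ← Pi.single_smul, smul_single, smul_eq_mul,
    mul_one]
  exact map_sum (AddMonoidHom.single _ a) _ _

theorem psiL_single (ρ : MB d n) (a : Fin d) (M : Matrix (Fin (n a)) (Fin (n a)) ℂ) :
    psiL ρ (Pi.single a M) = (ρ a * M).trace := by
  change ∑ b, (ρ b * (Pi.single a M : MB d n) b).trace = _
  rw [Finset.sum_eq_single a (fun b _ hb => by simp [hb]) (by simp), Pi.single_eq_same]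

theorem pairL_tmul (ρ x y p q : MB d n) :
    pairL ρ x y (p ⊗ₜ q) = psiL ρ (star x * p) * psiL ρ (star y * q) :=
  rfl

theorem psiL_star_single_inv_mul {ρ : MB d n} {b : Fin d} (hH : (ρ b).IsHermitian)
    (hdet : IsUnit (ρ b).det) (X : MB d n) :
    psiL ρ (star (Pi.single b (ρ b)⁻¹) * X) = (X b).trace := by
  rw [← Pi.single_star, star_eq_conjTranspose, conjTranspose_nonsing_inv, hH.eq,
    ← Pi.single_mul_left, psiL_single, ← mul_assoc, mul_nonsing_inv _ hdet, one_mul]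

variable {c : ∀ a, Fin (n a) → ℂ}

theorem sum_smul_mul_blockUnit {mstar : MB d n →ₗ[ℂ] MB d n ⊗[ℂ] MB d n}
    {A : MB d n →ₗ[ℂ] MB d n} {s : ℂ}
    (hSchur : ∀ z, LinearMap.mul' ℂ (MB d n) (TensorProduct.map A A (mstar z)) = s • A z)
    (hmstar : ∀ a i j,
      mstar (blockUnit a i j) = ∑ l, (c a l)⁻¹ • (blockUnit a i l ⊗ₜ blockUnit a l j))
    (a : Fin d) (i j : Fin (n a)) :
    ∑ l, (c a l)⁻¹ • (A (blockUnit a i l) * A (blockUnit a l j)) = s • A (blockUnit a i j) := by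
  simpa [hmstar] using hSchur (blockUnit a i j)

/-- For `s = δ²` this is the paper's `(1/δ²) X^{ab}`, with block column `j` weighted by
`(ρ_a)_jj⁻¹` because `ψ` is not tracial. -/
noncomputable def blockProjection (A : MB d n →ₗ[ℂ] MB d n) (s : ℂ) (c : ∀ a, Fin (n a) → ℂ)
    (a b : Fin d) : Matrix (Fin (n a) × Fin (n b)) (Fin (n a) × Fin (n b)) ℂ :=
  comp _ _ _ _ ℂ (of fun i j => (s * c a j)⁻¹ • A (blockUnit a i j) b)

theorem isIdempotentElem_blockProjection {A : MB d n →ₗ[ℂ] MB d n} {s : ℂ} (hs : s ≠ 0)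
    (a b : Fin d) (hA : ∀ i j,
      ∑ l, (c a l)⁻¹ • (A (blockUnit a i l) * A (blockUnit a l j)) = s • A (blockUnit a i j)) :
    IsIdempotentElem (blockProjection A s c a b) := by
  refine (isIdempotentElem_of_sum_smul_mul _ _ fun i j => ?_).map (compRingEquiv _ _ ℂ)
  have hb := congrFun (hA i j) b
  simp only [Finset.sum_apply, Pi.smul_apply, Pi.mul_apply] at hb
  simp only [mul_inv, mul_smul]
  rw [← Finset.smul_sum, hb, smul_smul, inv_mul_cancel₀ hs, one_smul]

theorem mul_trace_blockProjection (A : MB d n →ₗ[ℂ] MB d n) {s : ℂ} (hs : s ≠ 0) (a b : Fin d) :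
    s * (blockProjection A s c a b).trace =
      (A (Pi.single a (diagonal fun k => (c a k)⁻¹)) b).trace := by
  rw [blockProjection, trace_comp, single_diagonal_eq_sum_blockUnit, map_sum]
  simp only [Finset.sum_apply, map_smul, Pi.smul_apply, trace_sum, trace_smul, of_apply,
    smul_eq_mul, Finset.mul_sum, mul_inv, ← mul_assoc, mul_inv_cancel₀ hs, one_mul]

section Diagonal

variable {ρ : MB d n} (hρ : ∀ a, ρ a = diagonal (c a))
include hρ

theorem psiL_star_blockUnit_mul (a : Fin d) (i j : Fin (n a)) (X : MB d n) :
    psiL ρ (star (blockUnit a i j) * X) = c a j * X a i j := by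
  rw [star_blockUnit, blockUnit, ← Pi.single_mul_left, psiL_single, hρ, trace_mul_comm,
    mul_assoc, trace_single_mul, mul_diagonal, one_smul, mul_comm]

theorem psiL_mul_blockUnit (a : Fin d) (i j : Fin (n a)) (X : MB d n) :
    psiL ρ (X * blockUnit a i j) = c a j * X a j i := by
  rw [blockUnit, ← Pi.single_mul_right, psiL_single, hρ, ← mul_assoc, trace_mul_single]
  simp [diagonal_mul]

theorem pairL_stdBasis (u v : Σ a, Fin (n a) × Fin (n a)) :
    pairL ρ (stdBasis u) (stdBasis v) =
      (c u.1 u.2.2 * c v.1 v.2.2) • (stdBasis.tensorProduct stdBasis).coord (u, v) := by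
  refine TensorProduct.ext' fun x y => ?_
  rw [pairL_tmul, stdBasis_apply, stdBasis_apply, psiL_star_blockUnit_mul hρ,
    psiL_star_blockUnit_mul hρ, LinearMap.smul_apply, Module.Basis.coord_apply,
    Module.Basis.tensorProduct_repr_tmul_apply, stdBasis_repr, stdBasis_repr, smul_eq_mul]
  ring

variable (hc : ∀ a k, c a k ≠ 0)
include hc

theorem tensor_ext_pairL {w w' : MB d n ⊗[ℂ] MB d n}
    (h : ∀ x y, pairL ρ x y w = pairL ρ x y w') : w = w' := by
  refine (stdBasis.tensorProduct stdBasis).ext_elem fun ⟨u, v⟩ => ?_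
  have huv := h (stdBasis u) (stdBasis v)
  rw [pairL_stdBasis hρ, LinearMap.smul_apply, LinearMap.smul_apply,
    Module.Basis.coord_apply, Module.Basis.coord_apply, smul_eq_mul, smul_eq_mul] at huv
  exact mul_left_cancel₀ (mul_ne_zero (hc _ _) (hc _ _)) huv

theorem mstar_blockUnit {mstar : MB d n →ₗ[ℂ] MB d n ⊗[ℂ] MB d n}
    (hmstar : ∀ x y z : MB d n, psiL ρ (star (x * y) * z) = pairL ρ x y (mstar z))
    (a : Fin d) (i j : Fin (n a)) :
    mstar (blockUnit a i j) = ∑ l, (c a l)⁻¹ • (blockUnit a i l ⊗ₜ blockUnit a l j) := by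
  refine tensor_ext_pairL hρ hc fun x y => ?_
  simp only [← hmstar, map_sum, map_smul, pairL_tmul, psiL_mul_blockUnit hρ, star_mul,
    Pi.mul_apply, mul_apply, Finset.mul_sum, smul_eq_mul]
  refine Finset.sum_congr rfl fun l _ => ?_
  field_simp [hc a l]

end Diagonal

end MB

open MB

theorem stmt5_general {d : ℕ} {n : Fin d → ℕ} (c : ∀ a, Fin (n a) → ℝ)
    (hc : ∀ a k, 0 < c a k)
    (ρ : MB d n) (hρ : ∀ a, ρ a = Matrix.diagonal (fun k => (c a k : ℂ)))
    (δ : ℝ) (hδ : 0 < δ)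
    (mstar : MB d n →ₗ[ℂ] MB d n ⊗[ℂ] MB d n)
    (hmstar : ∀ x y z : MB d n,
      psiL ρ (star (x * y) * z) = pairL ρ x y (mstar z))
    (A : MB d n →ₗ[ℂ] MB d n)
    (hSchur : ∀ z : MB d n,
      LinearMap.mul' ℂ (MB d n) (TensorProduct.map A A (mstar z)) = (δ ^ 2 : ℂ) • A z) :
    ∀ a b : Fin d, ∃ k : ℕ,
      psiL ρ (star (Pi.single b ((ρ b)⁻¹)) * A (Pi.single a ((ρ a)⁻¹))) =
        (δ ^ 2 : ℂ) * k := by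
  intro a b
  have hc' : ∀ a k, (c a k : ℂ) ≠ 0 := fun a k => Complex.ofReal_ne_zero.mpr (hc a k).ne'
  have hδ' : (δ ^ 2 : ℂ) ≠ 0 := pow_ne_zero 2 (Complex.ofReal_ne_zero.mpr hδ.ne')
  have hunits := sum_smul_mul_blockUnit hSchur (mstar_blockUnit hρ hc' hmstar) a
  have hP := isIdempotentElem_blockProjection (c := fun a k => (c a k : ℂ)) hδ' a b hunits
  have hH : (ρ b).IsHermitian := by
    rw [hρ]
    exact isHermitian_diagonal_of_self_adjoint _ (funext fun k => Complex.conj_ofReal _)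
  have hdet : IsUnit (ρ b).det := by
    simpa [hρ, Finset.prod_ne_zero_iff] using hc' b
  have hinv : (ρ a)⁻¹ = diagonal fun k => (c a k : ℂ)⁻¹ :=
    inv_eq_left_inv (by simp [hρ, inv_mul_cancel₀ (hc' a _)])
  refine ⟨_, Eq.trans ?_ (congrArg _ (trace_eq_rank_of_isIdempotentElem hP))⟩
  rw [psiL_star_single_inv_mul hH hdet, hinv, mul_trace_blockProjection A hδ']

/-- let `(B, A, ψ)` be a quantum graph with `B = ⊕_a M_{n_a}` and
`ψ = ⊕_a Tr(ρ_a ·)` a `δ`-form with each `ρ_a` diagonal.  Define the matrix `D ∈ M_d` by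
`D_{ab} = ⟨ρ_b⁻¹, A(ρ_a⁻¹)⟩_ψ` (with `⟨x,y⟩_ψ = ψ(x*y)`, and `ρ_a⁻¹` viewed inside the
`a`-th block).  Then all entries of `(1/δ²) D` are non-negative integers. -/
theorem stmt5 {d : ℕ} {n : Fin d → ℕ} (c : ∀ a, Fin (n a) → ℝ)
    (hc : ∀ a k, 0 < c a k)
    (ρ : MB d n) (hρ : ∀ a, ρ a = Matrix.diagonal (fun k => (c a k : ℂ)))
    (δ : ℝ) (hδ : 0 < δ)
    (mstar : MB d n →ₗ[ℂ] MB d n ⊗[ℂ] MB d n)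
    (hmstar : ∀ x y z : MB d n,
      psiL ρ (star (x * y) * z) = pairL ρ x y (mstar z))
    (hform : ∀ z : MB d n, LinearMap.mul' ℂ (MB d n) (mstar z) = (δ ^ 2 : ℂ) • z)
    (A : MB d n →ₗ[ℂ] MB d n)
    (hAstar : ∀ x, A (star x) = star (A x))
    (hSchur : ∀ z : MB d n,
      LinearMap.mul' ℂ (MB d n) (TensorProduct.map A A (mstar z)) = (δ ^ 2 : ℂ) • A z) :
    ∀ a b : Fin d, ∃ k : ℕ,
      psiL ρ (star (Pi.single b ((ρ b)⁻¹)) * A (Pi.single a ((ρ a)⁻¹))) =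
        (δ ^ 2 : ℂ) * k :=
  stmt5_general c hc ρ hρ δ hδ mstar hmstar A hSchur
end

section
/- Let ρ ∈ M_n be positive invertible with Tr(ρ^{-1}) = δ², and let X_1, …, X_d ∈ M_n satisfy the KMS-orthogonality Tr(X_i* ρ^{-1/2} X_j ρ^{-1/2}) = δ² δ_{ij}. Define V_i := ρ^{-1/4} X_i ρ^{1/4}. Then Tr(ρ^{-1} V_i* V_j) = δ² δ_{ij}, and the map A(x) := Σ_{i=1}^d V_i x V_i* satisfies m(A⊗A)m* = δ² A, i.e. A is a quantum adjacency operator for ψ = Tr(ρ ·). -/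
open scoped TensorProduct ComplexOrder
open Matrix

/-- The state `ψ = Tr(ρ ·)` on `M_n` as a linear functional. -/
noncomputable def psi1 {n : ℕ} (ρ : Matrix (Fin n) (Fin n) ℂ) :
    Matrix (Fin n) (Fin n) ℂ →ₗ[ℂ] ℂ where
  toFun X := (ρ * X).trace
  map_add' x y := by simp [mul_add]
  map_smul' c x := by simp [mul_smul_comm]

/-- The GNS inner product on `M_n ⊗ M_n` paired against the pure tensor `x ⊗ y` in the first
(conjugated) slot. -/
noncomputable def pair1 {n : ℕ} (ρ x y : Matrix (Fin n) (Fin n) ℂ) :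
    (Matrix (Fin n) (Fin n) ℂ ⊗[ℂ] Matrix (Fin n) (Fin n) ℂ) →ₗ[ℂ] ℂ :=
  TensorProduct.lift
    (LinearMap.mk₂ ℂ (fun c e => psi1 ρ (star x * c) * psi1 ρ (star y * e))
      (fun c c' e => by simp [mul_add, map_add, add_mul])
      (fun s c e => by simp [mul_smul_comm, _root_.map_smul, smul_eq_mul]; ring)
      (fun c e e' => by simp [mul_add, map_add])
      (fun s c e => by simp [mul_smul_comm, _root_.map_smul, smul_eq_mul]; ring))

/-- The completely positive map `A(x) = Σ_r V_r x V_r*` as a linear map on `M_n`. -/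
noncomputable def krausMap {n m : ℕ} (V : Fin m → Matrix (Fin n) (Fin n) ℂ) :
    Matrix (Fin n) (Fin n) ℂ →ₗ[ℂ] Matrix (Fin n) (Fin n) ℂ where
  toFun x := ∑ r, V r * x * (V r)ᴴ
  map_add' x y := by simp [mul_add, add_mul, Finset.sum_add_distrib]
  map_smul' c x := by simp [mul_smul_comm, smul_mul_assoc, Finset.smul_sum]

/-- The real power `ρ^β` of a Hermitian matrix, via its spectral decomposition. -/
noncomputable def hpow {n : ℕ} {ρ : Matrix (Fin n) (Fin n) ℂ} (hρ : ρ.IsHermitian)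
    (β : ℝ) : Matrix (Fin n) (Fin n) ℂ :=
  (hρ.eigenvectorUnitary : Matrix (Fin n) (Fin n) ℂ) *
    Matrix.diagonal (fun i => ((hρ.eigenvalues i ^ β : ℝ) : ℂ)) *
    star (hρ.eigenvectorUnitary : Matrix (Fin n) (Fin n) ℂ)

/-! Conjugating by `ρ^{-1/4}` and `ρ^{1/4}` turns the KMS inner product
`Tr(X* ρ^{-1/2} Y ρ^{-1/2})` into `Tr(ρ⁻¹ V* W)`, by cyclicity of the trace.
The pairing `⟨x ⊗ y, w⟩ = (ψ ⊗ ψ)((x* ⊗ y*) w)` is nondegenerate (it contains the coordinate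
functionals of the standard basis), so `m*` is forced to be `z ↦ Σ_{j,k} z e_{jk} ρ⁻¹ ⊗ e_{kj}`.
Then `m(A ⊗ A)m*(z) = Σ_{r,s} V_r z (Σ_{j,k} e_{jk} ρ⁻¹ V_r* V_s e_{kj}) V_s*`, and since
`Σ_{j,k} e_{jk} M e_{kj} = Tr(M) • 1`, orthogonality of the `V_r` leaves `δ² A(z)`. -/

namespace Matrix

variable {l m R : Type*} [Fintype l] [Semiring R]

theorem sum_single_mul_mul_single [DecidableEq l] (M : Matrix l l R) :
    ∑ j, ∑ k, single j k (1 : R) * M * single k j 1 = M.trace • (1 : Matrix l l R) := by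
  ext p q
  simp [sum_apply, single_apply, trace, one_apply, ite_and]

theorem stdBasis_repr_apply [Finite m] (u : Matrix l m R) (i : l) (j : m) :
    (stdBasis R l m).repr u (i, j) = u i j := by
  simp [stdBasis]

end Matrix

section hpow

variable {n : ℕ} {ρ : Matrix (Fin n) (Fin n) ℂ}

theorem hpow_zero (hρ : ρ.IsHermitian) : hpow hρ 0 = 1 := by
  simp [hpow]

theorem hpow_one (hρ : ρ.IsHermitian) : hpow hρ 1 = ρ := by
  simpa [hpow, Function.comp_def] using hρ.spectral_theorem.symm

theorem conjTranspose_hpow (hρ : ρ.IsHermitian) (a : ℝ) : (hpow hρ a)ᴴ = hpow hρ a := by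
  simp [hpow, Matrix.mul_assoc, star_eq_conjTranspose, diagonal_conjTranspose, Pi.star_def]

theorem hpow_mul_hpow (hρ : ρ.PosDef) (a b : ℝ) :
    hpow hρ.1 a * hpow hρ.1 b = hpow hρ.1 (a + b) := by
  have hU : star (hρ.1.eigenvectorUnitary : Matrix (Fin n) (Fin n) ℂ) *
      hρ.1.eigenvectorUnitary = 1 := Unitary.coe_star_mul_self _
  simp only [hpow, Matrix.mul_assoc]
  rw [← Matrix.mul_assoc (star _), hU, Matrix.one_mul, ← Matrix.mul_assoc (diagonal _),
    diagonal_mul_diagonal]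
  simp [← Complex.ofReal_mul, ← Real.rpow_add (hρ.eigenvalues_pos _)]

theorem inv_eq_hpow_neg_one (hρ : ρ.PosDef) : ρ⁻¹ = hpow hρ.1 (-1) := by
  refine Matrix.inv_eq_right_inv ?_
  simpa only [hpow_one, add_neg_cancel, hpow_zero] using hpow_mul_hpow hρ 1 (-1)

theorem trace_inv_mul_conjTranspose_mul_hpow_conj (hρ : ρ.PosDef)
    (X Y : Matrix (Fin n) (Fin n) ℂ) :
    (ρ⁻¹ * (hpow hρ.1 (-(1/4)) * X * hpow hρ.1 (1/4))ᴴ *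
        (hpow hρ.1 (-(1/4)) * Y * hpow hρ.1 (1/4))).trace =
      (Xᴴ * hpow hρ.1 (-(1/2)) * Y * hpow hρ.1 (-(1/2))).trace := by
  have hmul (a b : ℝ) (C : Matrix (Fin n) (Fin n) ℂ) :
      hpow hρ.1 a * (hpow hρ.1 b * C) = hpow hρ.1 (a + b) * C := by
    rw [← Matrix.mul_assoc, hpow_mul_hpow hρ]
  rw [inv_eq_hpow_neg_one hρ]
  simp only [conjTranspose_mul, conjTranspose_hpow, Matrix.mul_assoc, hmul]
  rw [trace_mul_comm]
  simp only [Matrix.mul_assoc, hpow_mul_hpow hρ]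
  norm_num

end hpow

section pairing

variable {n : ℕ} {ρ : Matrix (Fin n) (Fin n) ℂ}

theorem pair1_tmul (x y u v : Matrix (Fin n) (Fin n) ℂ) :
    pair1 ρ x y (u ⊗ₜ v) = psi1 ρ (star x * u) * psi1 ρ (star y * v) := by
  simp [pair1]

theorem pair1_star_inv_mul_single (hρ : IsUnit ρ.det) (a b c d : Fin n)
    (w : Matrix (Fin n) (Fin n) ℂ ⊗[ℂ] Matrix (Fin n) (Fin n) ℂ) :
    pair1 ρ (star (ρ⁻¹ * single b a 1)) (star (ρ⁻¹ * single d c 1)) w =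
      ((stdBasis ℂ (Fin n) (Fin n)).tensorProduct (stdBasis ℂ (Fin n) (Fin n))).repr w
        ((a, b), (c, d)) := by
  induction w using TensorProduct.induction_on with
  | zero => simp
  | tmul u v =>
    simp [pair1_tmul, psi1, ← Matrix.mul_assoc, mul_nonsing_inv _ hρ, trace_single_mul,
      stdBasis_repr_apply, mul_comm]
  | add w w' hw hw' => rw [map_add, map_add, hw, hw', Finsupp.add_apply]

theorem eq_of_forall_pair1_eq (hρ : IsUnit ρ.det)
    {w w' : Matrix (Fin n) (Fin n) ℂ ⊗[ℂ] Matrix (Fin n) (Fin n) ℂ}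
    (h : ∀ x y, pair1 ρ x y w = pair1 ρ x y w') : w = w' :=
  ((stdBasis ℂ _ _).tensorProduct (stdBasis ℂ _ _)).ext_elem fun ⟨(a, b), (c, d)⟩ => by
    rw [← pair1_star_inv_mul_single hρ, ← pair1_star_inv_mul_single hρ]
    exact h _ _

theorem pair1_sum_mul_single_tmul_single (hρ : IsUnit ρ.det) (x y z : Matrix (Fin n) (Fin n) ℂ) :
    pair1 ρ x y (∑ j, ∑ k, (z * single j k 1 * ρ⁻¹) ⊗ₜ single k j 1) =
      psi1 ρ (star (x * y) * z) := by
  have hψ (j k : Fin n) :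
      psi1 ρ (star x * (z * single j k 1 * ρ⁻¹)) = (star x * z) k j := by
    simp only [psi1, LinearMap.coe_mk, AddHom.coe_mk]
    rw [trace_mul_comm]
    simp only [Matrix.mul_assoc, nonsing_inv_mul _ hρ, Matrix.mul_one]
    simp [← Matrix.mul_assoc, trace_mul_single]
  have hψ' (j k : Fin n) : psi1 ρ (star y * single k j 1) = (ρ * star y) j k := by
    simp [psi1, ← Matrix.mul_assoc, trace_mul_single]
  simp only [map_sum, pair1_tmul]
  calc ∑ j, ∑ k, psi1 ρ (star x * (z * single j k 1 * ρ⁻¹)) * psi1 ρ (star y * single k j 1)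
      = (ρ * star y * (star x * z)).trace := by
        simp only [hψ, hψ', trace, diag, mul_apply, mul_comm]
    _ = psi1 ρ (star (x * y) * z) := by simp [psi1, star_mul, Matrix.mul_assoc]

theorem eq_sum_tmul_of_pair1_eq (hρ : IsUnit ρ.det)
    {z : Matrix (Fin n) (Fin n) ℂ} {w : Matrix (Fin n) (Fin n) ℂ ⊗[ℂ] Matrix (Fin n) (Fin n) ℂ}
    (hw : ∀ x y, psi1 ρ (star (x * y) * z) = pair1 ρ x y w) :
    w = ∑ j, ∑ k, (z * single j k 1 * ρ⁻¹) ⊗ₜ single k j 1 :=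
  eq_of_forall_pair1_eq hρ fun x y => by
    rw [← hw, pair1_sum_mul_single_tmul_single hρ]

end pairing

theorem mul'_map_krausMap_sum_tmul {n m : ℕ} (V : Fin m → Matrix (Fin n) (Fin n) ℂ)
    (M z : Matrix (Fin n) (Fin n) ℂ) :
    LinearMap.mul' ℂ (Matrix (Fin n) (Fin n) ℂ) (TensorProduct.map (krausMap V) (krausMap V)
        (∑ j, ∑ k, (z * single j k 1 * M) ⊗ₜ single k j 1)) =
      ∑ r, ∑ s, (M * (V r)ᴴ * V s).trace • (V r * z * (V s)ᴴ) := by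
  calc _ = ∑ j, ∑ k, ∑ s, ∑ r,
        V r * z * (single j k 1 * (M * (V r)ᴴ * V s) * single k j 1) * (V s)ᴴ := by
        simp only [map_sum, TensorProduct.map_tmul, LinearMap.mul'_apply, krausMap,
          LinearMap.coe_mk, AddHom.coe_mk, Finset.sum_mul, Finset.mul_sum, Matrix.mul_assoc]
    _ = ∑ r, ∑ s,
        V r * z * (∑ j, ∑ k, single j k 1 * (M * (V r)ᴴ * V s) * single k j 1) * (V s)ᴴ := by
        simp only [Finset.mul_sum, Finset.sum_mul, Finset.sum_comm (γ := Fin n) (α := Fin m)]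
        exact Finset.sum_comm
    _ = _ := by
        simp only [sum_single_mul_mul_single, Matrix.mul_smul, Matrix.smul_mul, Matrix.mul_one]

theorem stmt11_general {n m : ℕ} (ρ : Matrix (Fin n) (Fin n) ℂ) (hρ : ρ.PosDef)
    (δ : ℝ)
    (X : Fin m → Matrix (Fin n) (Fin n) ℂ)
    (horthX : ∀ i j, ((X i)ᴴ * hpow hρ.1 (-(1/2)) * X j * hpow hρ.1 (-(1/2))).trace =
      if i = j then (δ ^ 2 : ℂ) else 0)
    (V : Fin m → Matrix (Fin n) (Fin n) ℂ)
    (hV : ∀ i, V i = hpow hρ.1 (-(1/4)) * X i * hpow hρ.1 (1/4))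
    (mstar : Matrix (Fin n) (Fin n) ℂ →ₗ[ℂ]
      Matrix (Fin n) (Fin n) ℂ ⊗[ℂ] Matrix (Fin n) (Fin n) ℂ)
    (hmstar : ∀ x y z : Matrix (Fin n) (Fin n) ℂ,
      psi1 ρ (star (x * y) * z) = pair1 ρ x y (mstar z)) :
    (∀ i j, (ρ⁻¹ * (V i)ᴴ * V j).trace = if i = j then (δ ^ 2 : ℂ) else 0) ∧
    (∀ z : Matrix (Fin n) (Fin n) ℂ,
      LinearMap.mul' ℂ (Matrix (Fin n) (Fin n) ℂ)
          (TensorProduct.map (krausMap V) (krausMap V) (mstar z)) =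
        (δ ^ 2 : ℂ) • krausMap V z) := by
  have horthV (i j : Fin m) :
      (ρ⁻¹ * (V i)ᴴ * V j).trace = if i = j then (δ ^ 2 : ℂ) else 0 := by
    rw [hV, hV, trace_inv_mul_conjTranspose_mul_hpow_conj hρ, horthX]
  refine ⟨horthV, fun z => ?_⟩
  have hdet : IsUnit ρ.det := (isUnit_iff_isUnit_det ρ).mp hρ.isUnit
  rw [eq_sum_tmul_of_pair1_eq hdet (hmstar · · z), mul'_map_krausMap_sum_tmul]
  simp [horthV, ite_smul, Finset.smul_sum, krausMap]

/-- let `ρ ∈ M_n` be positive invertible with `Tr(ρ⁻¹) = δ²`, and let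
`X_1,…,X_d ∈ M_n` satisfy the KMS-orthogonality `Tr(X_i* ρ^{-1/2} X_j ρ^{-1/2}) = δ² δ_{ij}`.
Set `V_i := ρ^{-1/4} X_i ρ^{1/4}`.  Then `Tr(ρ⁻¹ V_i* V_j) = δ² δ_{ij}` and
`A(x) = Σ_i V_i x V_i*` satisfies `m(A⊗A)m* = δ² A`, i.e. it is a quantum adjacency
operator for `ψ = Tr(ρ ·)`. -/
theorem stmt11 {n m : ℕ} (ρ : Matrix (Fin n) (Fin n) ℂ) (hρ : ρ.PosDef)
    (δ : ℝ) (hδ : 0 < δ) (hform : (ρ⁻¹).trace = (δ ^ 2 : ℂ))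
    (X : Fin m → Matrix (Fin n) (Fin n) ℂ)
    (horthX : ∀ i j, ((X i)ᴴ * hpow hρ.1 (-(1/2)) * X j * hpow hρ.1 (-(1/2))).trace =
      if i = j then (δ ^ 2 : ℂ) else 0)
    (V : Fin m → Matrix (Fin n) (Fin n) ℂ)
    (hV : ∀ i, V i = hpow hρ.1 (-(1/4)) * X i * hpow hρ.1 (1/4))
    (mstar : Matrix (Fin n) (Fin n) ℂ →ₗ[ℂ]
      Matrix (Fin n) (Fin n) ℂ ⊗[ℂ] Matrix (Fin n) (Fin n) ℂ)
    (hmstar : ∀ x y z : Matrix (Fin n) (Fin n) ℂ,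
      psi1 ρ (star (x * y) * z) = pair1 ρ x y (mstar z)) :
    (∀ i j, (ρ⁻¹ * (V i)ᴴ * V j).trace = if i = j then (δ ^ 2 : ℂ) else 0) ∧
    (∀ z : Matrix (Fin n) (Fin n) ℂ,
      LinearMap.mul' ℂ (Matrix (Fin n) (Fin n) ℂ)
          (TensorProduct.map (krausMap V) (krausMap V) (mstar z)) =
        (δ ^ 2 : ℂ) • krausMap V z) :=
  stmt11_general ρ hρ δ X horthX V hV mstar hmstar
end

section
/- With the notation of the orthonormal basis φ_{ar} = (1/δ) Σ_j e_{aj}ρ^{-1} ⊗ V_r e_{j1} in M_n ⊗_ψ M_n, where x ∈ M_n acts on the left on the first tensor factor, one has Σ_{a,r} ⟨φ_{ar}, x·φ_{ar}⟩ = Tr(x) · e_{11} · dim span{V_r}. Consequently, applying the normalized trace τ = Tr/n gives Σ_{a,r} τ(⟨φ_{ar}, x·φ_{ar}⟩) = τ(x) · dim span{V_r}. -/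
/-!
For Hermitian invertible `ρ` one has `ρ (e_{aj} ρ⁻¹)ᴴ = e_{ja}`, so the scalar
`ψ((e_{aj} ρ⁻¹)ᴴ x e_{ak} ρ⁻¹)` in the `(j, k)` term of `⟨φ_{ar}, x φ_{ar}⟩` is
`x_{aa} (ρ⁻¹)_{kj} / δ²`, while its matrix factor is `(V_rᴴ V_r)_{jk} e_{11}`. Summing over `j, k`
produces `x_{aa} Tr(ρ⁻¹ V_rᴴ V_r) / δ² · e_{11} = x_{aa} e_{11}`, and summing over `a` and `r` gives
`Tr(x) · m · e_{11}`. Orthogonality of the `V_r` for the form `Tr(ρ⁻¹ Aᴴ B)` makes them linearly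
independent, so `m = dim span{V_r}`.
-/

open scoped TensorProduct ComplexOrder
open Matrix

namespace Matrix

variable {K ι n : Type*} [Fintype n]

theorem linearIndependent_of_trace_mul_conjTranspose_mul_eq_ite [Field K] [StarRing K]
    [DecidableEq ι] (P : Matrix n n K) (V : ι → Matrix n n K) {d : K} (hd : d ≠ 0)
    (horth : ∀ r q, (P * (V r)ᴴ * V q).trace = if r = q then d else 0) :
    LinearIndependent K V := by
  rw [linearIndependent_iff']
  intro s g hsum q hq
  have h := congrArg (fun A => (P * (V q)ᴴ * A).trace) hsum
  simp only [Matrix.mul_sum, Matrix.mul_smul, trace_sum, trace_smul, horth, smul_eq_mul,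
    mul_ite, mul_zero, Finset.sum_ite_eq, if_pos hq, trace_zero] at h
  exact (mul_eq_zero.mp h).resolve_right hd

theorem trace_mul_eq_sum_sum [CommSemiring K] (P M : Matrix n n K) :
    (P * M).trace = ∑ j, ∑ k, P k j * M j k := by
  rw [trace, Finset.sum_comm]; rfl

variable [DecidableEq n]

theorem conjTranspose_mul_single_mul_mul_single [CommSemiring K] [StarRing K]
    (A B : Matrix n n K) (i j k l : n) :
    (A * single j i 1)ᴴ * (B * single k l 1) = (Aᴴ * B) j k • single i l 1 := by
  rw [conjTranspose_mul, conjTranspose_single, star_one, Matrix.mul_assoc, ← Matrix.mul_assoc Aᴴ,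
    ← Matrix.mul_assoc, single_mul_mul_single, one_mul, mul_one, smul_single, smul_eq_mul, mul_one]

theorem trace_mul_conjTranspose_single_mul_inv_mul [CommRing K] [StarRing K]
    {ρ : Matrix n n K} (hρ : ρ.IsHermitian) (hdet : IsUnit ρ.det) (x : Matrix n n K) (a j k : n) :
    (ρ * ((single a j 1 * ρ⁻¹)ᴴ * (x * single a k 1 * ρ⁻¹))).trace = x a a * ρ⁻¹ k j := by
  have hcancel : ρ * (single a j 1 * ρ⁻¹)ᴴ = single j a 1 := by
    rw [conjTranspose_mul, hρ.inv, conjTranspose_single, star_one, ← Matrix.mul_assoc,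
      mul_nonsing_inv _ hdet, Matrix.one_mul]
  rw [← Matrix.mul_assoc, hcancel, ← Matrix.mul_assoc, ← Matrix.mul_assoc, single_mul_mul_single,
    one_mul, mul_one, trace_single_mul, smul_eq_mul]

end Matrix

section InnerProducts

variable {n : ℕ} {ρ : Matrix (Fin n) (Fin n) ℂ}

theorem psi1_smul_conjTranspose_mul_smul (hρ : ρ.IsHermitian) (hdet : IsUnit ρ.det) (δ : ℝ)
    (x : Matrix (Fin n) (Fin n) ℂ) (a j k : Fin n) :
    psi1 ρ (((1 / (δ : ℂ)) • (single a j (1 : ℂ) * ρ⁻¹))ᴴ *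
        ((1 / (δ : ℂ)) • (x * single a k (1 : ℂ) * ρ⁻¹))) =
      ((δ : ℂ) ^ 2)⁻¹ * (x a a * ρ⁻¹ k j) := by
  simp only [psi1, LinearMap.coe_mk, AddHom.coe_mk, conjTranspose_smul, Matrix.smul_mul,
    Matrix.mul_smul, trace_smul, smul_eq_mul, trace_mul_conjTranspose_single_mul_inv_mul hρ hdet,
    one_div, star_inv₀, Complex.star_def, Complex.conj_ofReal]
  ring

theorem sum_psi1_smul_conjTranspose_mul (hρ : ρ.IsHermitian) (hdet : IsUnit ρ.det) {δ : ℝ}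
    (hδ : δ ≠ 0) {V : Matrix (Fin n) (Fin n) ℂ} (hV : (ρ⁻¹ * Vᴴ * V).trace = (δ ^ 2 : ℂ))
    (x : Matrix (Fin n) (Fin n) ℂ) (a i : Fin n) :
    ∑ j, ∑ k, psi1 ρ (((1 / (δ : ℂ)) • (single a j (1 : ℂ) * ρ⁻¹))ᴴ *
          ((1 / (δ : ℂ)) • (x * single a k (1 : ℂ) * ρ⁻¹))) •
        ((V * single j i (1 : ℂ))ᴴ * (V * single k i (1 : ℂ))) =
      x a a • single i i (1 : ℂ) := by
  simp only [psi1_smul_conjTranspose_mul_smul hρ hdet, conjTranspose_mul_single_mul_mul_single,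
    smul_smul, ← Finset.sum_smul]
  congr 1
  calc ∑ j, ∑ k, ((δ : ℂ) ^ 2)⁻¹ * (x a a * ρ⁻¹ k j) * (Vᴴ * V) j k
      = ((δ : ℂ) ^ 2)⁻¹ * x a a * (ρ⁻¹ * (Vᴴ * V)).trace := by
        simp only [trace_mul_eq_sum_sum, Finset.mul_sum]
        ring_nf
    _ = x a a := by
        rw [← Matrix.mul_assoc, hV]
        field_simp

end InnerProducts

theorem stmt13_general {n m : ℕ} (hn : 0 < n) (c : Fin n → ℝ) (hc : ∀ i, 0 < c i)
    (ρ : Matrix (Fin n) (Fin n) ℂ) (hρ : ρ = Matrix.diagonal (fun i => (c i : ℂ)))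
    (δ : ℝ) (hδ : 0 < δ)
    (V : Fin m → Matrix (Fin n) (Fin n) ℂ)
    (horth : ∀ r q, (ρ⁻¹ * (V r)ᴴ * V q).trace = if r = q then (δ ^ 2 : ℂ) else 0)
    (x : Matrix (Fin n) (Fin n) ℂ) :
    (∑ a, ∑ r : Fin m, ∑ j, ∑ k,
      psi1 ρ (((1 / (δ : ℂ)) • (single a j (1 : ℂ) * ρ⁻¹))ᴴ *
          ((1 / (δ : ℂ)) • (x * single a k (1 : ℂ) * ρ⁻¹))) •
        ((V r * single j (⟨0, hn⟩ : Fin n) (1 : ℂ))ᴴ *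
          (V r * single k (⟨0, hn⟩ : Fin n) (1 : ℂ)))) =
      (x.trace * (Module.finrank ℂ (Submodule.span ℂ (Set.range V)) : ℂ)) •
        single (⟨0, hn⟩ : Fin n) (⟨0, hn⟩ : Fin n) (1 : ℂ) ∧
    (∑ a, ∑ r : Fin m, ((n : ℂ))⁻¹ * (∑ j, ∑ k,
      psi1 ρ (((1 / (δ : ℂ)) • (single a j (1 : ℂ) * ρ⁻¹))ᴴ *
          ((1 / (δ : ℂ)) • (x * single a k (1 : ℂ) * ρ⁻¹))) •
        ((V r * single j (⟨0, hn⟩ : Fin n) (1 : ℂ))ᴴ *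
          (V r * single k (⟨0, hn⟩ : Fin n) (1 : ℂ)))).trace) =
      (((n : ℂ))⁻¹ * x.trace) * (Module.finrank ℂ (Submodule.span ℂ (Set.range V)) : ℂ) := by
  have hherm : ρ.IsHermitian := by
    rw [hρ]
    exact isHermitian_diagonal_of_self_adjoint _ (funext fun i => Complex.conj_ofReal (c i))
  have hdet : IsUnit ρ.det := by
    rw [hρ, det_diagonal, isUnit_iff_ne_zero, Finset.prod_ne_zero_iff]
    exact fun i _ => Complex.ofReal_ne_zero.mpr (hc i).ne'
  have hinner (a : Fin n) (r : Fin m) := sum_psi1_smul_conjTranspose_mul hherm hdet hδ.ne'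
    (by simpa using horth r r) x a ⟨0, hn⟩
  have hdim : (Module.finrank ℂ (Submodule.span ℂ (Set.range V)) : ℂ) = m := by
    rw [finrank_span_eq_card (linearIndependent_of_trace_mul_conjTranspose_mul_eq_ite ρ⁻¹ V
      (pow_ne_zero 2 (Complex.ofReal_ne_zero.mpr hδ.ne')) horth), Fintype.card_fin]
  have htrace : ∑ a : Fin n, ∑ _r : Fin m, x a a = x.trace * m := by
    rw [trace, Finset.sum_mul]
    simp [mul_comm]
  simp only [hinner, trace_smul, trace_single_eq_same, smul_eq_mul, mul_one, ← Finset.sum_smul,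
    ← Finset.mul_sum, htrace, hdim]
  exact ⟨trivial, by ring⟩

/-- with `φ_{ar} = (1/δ) Σ_j e_{aj}ρ⁻¹ ⊗ V_r e_{j1}` in `M_n ⊗_ψ M_n`
(`ψ = Tr(ρ·)`, `ρ` positive invertible diagonal with `Tr(ρ⁻¹) = δ²`, and
`Tr(ρ⁻¹ V_r* V_q) = δ² δ_{rq}`), and `x ∈ M_n` acting on the left of the first tensor
factor, one has `Σ_{a,r} ⟨φ_{ar}, x·φ_{ar}⟩ = Tr(x) · e_{11} · dim span{V_r}` (the inner
products being written out sesquilinearly as double sums); applying the normalized trace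
`τ = Tr/n` gives `Σ_{a,r} τ(⟨φ_{ar}, x·φ_{ar}⟩) = τ(x) · dim span{V_r}`. -/
theorem stmt13 {n m : ℕ} (hn : 0 < n) (c : Fin n → ℝ) (hc : ∀ i, 0 < c i)
    (ρ : Matrix (Fin n) (Fin n) ℂ) (hρ : ρ = Matrix.diagonal (fun i => (c i : ℂ)))
    (δ : ℝ) (hδ : 0 < δ) (hform : (ρ⁻¹).trace = (δ ^ 2 : ℂ))
    (V : Fin m → Matrix (Fin n) (Fin n) ℂ)
    (horth : ∀ r q, (ρ⁻¹ * (V r)ᴴ * V q).trace = if r = q then (δ ^ 2 : ℂ) else 0)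
    (x : Matrix (Fin n) (Fin n) ℂ) :
    (∑ a, ∑ r : Fin m, ∑ j, ∑ k,
      psi1 ρ (((1 / (δ : ℂ)) • (single a j (1 : ℂ) * ρ⁻¹))ᴴ *
          ((1 / (δ : ℂ)) • (x * single a k (1 : ℂ) * ρ⁻¹))) •
        ((V r * single j (⟨0, hn⟩ : Fin n) (1 : ℂ))ᴴ *
          (V r * single k (⟨0, hn⟩ : Fin n) (1 : ℂ)))) =
      (x.trace * (Module.finrank ℂ (Submodule.span ℂ (Set.range V)) : ℂ)) •
        single (⟨0, hn⟩ : Fin n) (⟨0, hn⟩ : Fin n) (1 : ℂ) ∧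
    (∑ a, ∑ r : Fin m, ((n : ℂ))⁻¹ * (∑ j, ∑ k,
      psi1 ρ (((1 / (δ : ℂ)) • (single a j (1 : ℂ) * ρ⁻¹))ᴴ *
          ((1 / (δ : ℂ)) • (x * single a k (1 : ℂ) * ρ⁻¹))) •
        ((V r * single j (⟨0, hn⟩ : Fin n) (1 : ℂ))ᴴ *
          (V r * single k (⟨0, hn⟩ : Fin n) (1 : ℂ)))).trace) =
      (((n : ℂ))⁻¹ * x.trace) * (Module.finrank ℂ (Submodule.span ℂ (Set.range V)) : ℂ) :=
  stmt13_general hn c hc ρ hρ δ hδ V horth x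
end
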